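/- If A is an uncountable set, then there exists a partial continuous function A^A ⇀ A with open domain that is not partial sequential. -/

import Mathlib

open Classical

noncomputable section

namespace OostenK2

universe u

/-! ### Finite partial functions -/

/-- Finite partial functions `A ⇀ A`, as finite functional graphs,
ordered by inclusion of graphs. -/
abbrev FPF (A : Type u) : Type u :=
  {p : Set (A × A) // (∀ ⦃a b b'⦄, (a, b) ∈ p → (a, b') ∈ p → b = b') ∧ p.Finite}

variable {A : Type u}

/-- The domain of a finite partial function. -/
def FPF.dom (p : FPF A) : Set A := Prod.fst '' p.val

/-- The empty finite partial function (the root of sequential trees). -/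
def FPF.empty (A : Type u) : FPF A :=
  ⟨∅, fun _ _ _ h => absurd h (Set.notMem_empty _), Set.finite_empty⟩

/-- A total function `α` extends the finite partial function `p`. -/
def agrees (α : A → A) (p : FPF A) : Prop := ∀ ⦃a b⦄, (a, b) ∈ p.val → α a = b

/-- A partial function `β` extends the finite partial function `p`. -/
def agreesP (β : A → Option A) (p : FPF A) : Prop :=
  ∀ ⦃a b⦄, (a, b) ∈ p.val → β a = some b

/-- Two finite partial functions are compatible if their union is a function. -/
def compatFPF (s t : FPF A) : Prop :=
  ∀ ⦃a b b'⦄, (a, b) ∈ s.val → (a, b') ∈ t.val → b = b'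

/-! ### Trees -/

section Trees

variable {X : Type*} [PartialOrder X]

/-- A leaf of `T`: an element of `T` with no strict extension in `T`. -/
def IsLeaf (T : Set X) (p : X) : Prop := p ∈ T ∧ ¬∃ q ∈ T, p < q

/-- `q` is an immediate successor of `p` in `T`. -/
def ImmSucc (T : Set X) (p q : X) : Prop :=
  q ∈ T ∧ p < q ∧ ¬∃ t ∈ T, p < t ∧ t < q

/-- `T` is a tree with root `root`: the root belongs to `T`, lies below every
element, and the predecessors of any element form a chain. -/
def IsTreeOn (root : X) (T : Set X) : Prop :=
  root ∈ T ∧ (∀ p ∈ T, root ≤ p) ∧ ∀ p ∈ T, IsChain (· ≤ ·) {t | t ∈ T ∧ t ≤ p}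

/-- A tree is well-founded iff it has no infinite strictly increasing path. -/
def WellFoundedTree (T : Set X) : Prop :=
  ¬∃ f : ℕ → X, (∀ n, f n ∈ T) ∧ StrictMono f

end Trees

/-- A sequential tree: a tree of finite partial functions, rooted at the empty
function, in which all immediate successors of a non-leaf `p` have domain
`dom p ∪ {a}` for a single `a ∉ dom p`. -/
def IsSeqTree (T : Set (FPF A)) : Prop :=
  IsTreeOn (FPF.empty A) T ∧
  ∀ p ∈ T, ¬IsLeaf T p →
    ∃ a ∉ FPF.dom p, ∀ q, ImmSucc T p q → FPF.dom q = insert a (FPF.dom p)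

/-- A total sequential tree: the immediate successors of a non-leaf `p` are
*all* extensions of `p` with domain `dom p ∪ {a}`. -/
def IsTotalSeqTree (T : Set (FPF A)) : Prop :=
  IsTreeOn (FPF.empty A) T ∧
  ∀ p ∈ T, ¬IsLeaf T p →
    ∃ a ∉ FPF.dom p,
      ∀ q : FPF A, ImmSucc T p q ↔ p < q ∧ FPF.dom q = insert a (FPF.dom p)

/-- `Φ` (as a relation `(A → A) → A → Prop`) is a partial sequential function:
`Φ α = b` iff the path of `α` through some total sequential tree `T` ends in a
leaf `v` with `F v = b`. -/
def SeqRel (Φ : (A → A) → A → Prop) : Prop :=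
  ∃ (T : Set (FPF A)) (F : FPF A → A), IsTotalSeqTree T ∧
    ∀ α b, Φ α b ↔ ∃ v, IsLeaf T v ∧ agrees α v ∧ F v = b

/-- A total bisequential tree: pairs of finite partial functions ordered by
pairwise inclusion; at every non-leaf, either the first or the second component
is interrogated at a single new argument, with all possible answers present. -/
def IsTotalBiTree (T : Set (FPF A × FPF A)) : Prop :=
  IsTreeOn (FPF.empty A, FPF.empty A) T ∧
  ∀ p ∈ T, ¬IsLeaf T p →
    (∃ a ∉ FPF.dom p.1, ∀ q : FPF A × FPF A,
        ImmSucc T p q ↔ q.2 = p.2 ∧ p.1 ≤ q.1 ∧ FPF.dom q.1 = insert a (FPF.dom p.1)) ∨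
    (∃ b ∉ FPF.dom p.2, ∀ q : FPF A × FPF A,
        ImmSucc T p q ↔ q.1 = p.1 ∧ p.2 ≤ q.2 ∧ FPF.dom q.2 = insert b (FPF.dom p.2))

/-- `G` is a total bisequential function. -/
def BiSeqTotal (G : (A → A) → (A → A) → A) : Prop :=
  ∃ (T : Set (FPF A × FPF A)) (F : FPF A × FPF A → A), IsTotalBiTree T ∧
    ∀ α β, ∃ v, IsLeaf T v ∧ agrees α v.1 ∧ agrees β v.2 ∧ G α β = F v

/-! ### Interrogations (total functions)

Throughout, `mk : List A → A` is an injective coding of finite sequences,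
`qp b` is the code `⟨q,b⟩` of a query and `rp c` the code `⟨r,c⟩` of a result. -/

/-- `L` is an interrogation of `β` by `α`. -/
def Interrog (mk : List A → A) (qp : A → A) (α β : A → A) (L : List A) : Prop :=
  ∀ j (hj : j < L.length), ∃ b, α (mk (L.take j)) = qp b ∧ β b = L[j]'hj

/-- `φ_α(β) = c` via interrogations. -/
def phiRel (mk : List A → A) (qp rp : A → A) (α β : A → A) (c : A) : Prop :=
  ∃ L, Interrog mk qp α β L ∧ α (mk L) = rp c

/-- `L` is an `a`-interrogation of `β` by `α`. -/
def AInterrog (mk : List A → A) (qp : A → A) (a : A) (α β : A → A) (L : List A) : Prop :=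
  ∀ j (hj : j < L.length), ∃ b, α (mk (a :: L.take j)) = qp b ∧ β b = L[j]'hj

/-- `φ^a(α,β) = c` via `a`-interrogations. -/
def phiA (mk : List A → A) (qp rp : A → A) (a : A) (α β : A → A) (c : A) : Prop :=
  ∃ L, AInterrog mk qp a α β L ∧ α (mk (a :: L)) = rp c

/-- The application of `K₂(A)`: `αβ` is defined with value `γ` iff
`φ^a(α,β) = γ a` for every `a`. -/
def AppRel (mk : List A → A) (qp rp : A → A) (α β γ : A → A) : Prop :=
  ∀ a, phiA mk qp rp a α β (γ a)

/-! ### Partial combinatory algebras (abstractly) -/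

/-- A set with a partial binary application. -/
structure PCAStruct (X : Type*) where
  app : X → X → Part X

/-- Extension of the application to `Part`; `Part`-equality is Kleene equality. -/
def pap {X : Type*} (S : PCAStruct X) (u v : Part X) : Part X :=
  u.bind fun a => v.bind fun b => S.app a b

/-- `S` is a partial combinatory algebra: there are `k`, `s` with
`kxy = x` (everywhere defined), `sxy` defined, and `sxyz ≃ (xz)(yz)`. -/
def IsPCA {X : Type*} (S : PCAStruct X) : Prop :=
  ∃ k s : X,
    (∀ x y : X, pap S (S.app k x) (Part.some y) = Part.some x) ∧
    (∀ x y : X, (pap S (S.app s x) (Part.some y)).Dom) ∧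
    (∀ x y z : X,
      pap S (pap S (S.app s x) (Part.some y)) (Part.some z)
        = pap S (S.app x z) (S.app y z))

/-- `t`, `f` are Booleans of `S`: distinct, with a definition-by-cases combinator. -/
def IsBooleans {X : Type*} (S : PCAStruct X) (t f : X) : Prop :=
  t ≠ f ∧ ∃ C : X, ∀ a b : X,
    pap S (pap S (S.app C t) (Part.some a)) (Part.some b) = Part.some a ∧
    pap S (pap S (S.app C f) (Part.some a)) (Part.some b) = Part.some b

/-- Applicative morphism `γ : S → T`: a total relation such that some realizer
`r` tracks application. -/
def IsAppMor {X Y : Type*} (S : PCAStruct X) (T : PCAStruct Y) (γ : X → Set Y) : Prop :=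
  (∀ x, (γ x).Nonempty) ∧
  ∃ r : Y, ∀ x x' z : X, z ∈ S.app x x' → ∀ b ∈ γ x, ∀ b' ∈ γ x',
    ∃ w, w ∈ pap T (T.app r b) (Part.some b') ∧ w ∈ γ z

/-- The preorder on applicative morphisms. -/
def morLE {X Y : Type*} (T : PCAStruct Y) (γ γ' : X → Set Y) : Prop :=
  ∃ s : Y, ∀ x : X, ∀ b ∈ γ x, ∃ c, c ∈ T.app s b ∧ c ∈ γ' x

def morEquiv {X Y : Type*} (T : PCAStruct Y) (γ γ' : X → Set Y) : Prop :=
  morLE T γ γ' ∧ morLE T γ' γ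

/-- Composition of applicative morphisms (as total relations). -/
def morComp {X Y Z : Type*} (γ : X → Set Y) (ε : Y → Set Z) : X → Set Z :=
  fun x => ⋃ y ∈ γ x, ε y

/-- Decidability of a morphism w.r.t. chosen Booleans. -/
def IsDecidableMor {X Y : Type*} (T : PCAStruct Y) (γ : X → Set Y)
    (tX fX : X) (tY fY : Y) : Prop :=
  ∃ d : Y, (∀ b ∈ γ tX, T.app d b = Part.some tY) ∧
    (∀ b ∈ γ fX, T.app d b = Part.some fY)

/-- `rf` represents the partial function `f : X ⇀ X` w.r.t. `γ`. -/
def RepresentsPFun {X Y : Type*} (T : PCAStruct Y) (γ : X → Set Y)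
    (f : X → Option X) (rf : Y) : Prop :=
  ∀ a x, f a = some x → ∀ b ∈ γ a, ∃ c, c ∈ T.app rf b ∧ c ∈ γ x

/-- The pca `K₂(A)` on `A^A` (application via `a`-interrogations). -/
def K2 (mk : List A → A) (qp rp : A → A) : PCAStruct (A → A) where
  app α β := ⟨∀ a, ∃ c, phiA mk qp rp a α β c, fun h a => (h a).choose⟩

/-! ### Interrogations for partial functions -/

/-- Interrogation of a partial `β` by a partial `α`. -/
def PInterrog (mk : List A → A) (qp : A → A) (α β : A → Option A) (L : List A) : Prop :=
  ∀ j (hj : j < L.length), ∃ b, α (mk (L.take j)) = some (qp b) ∧ β b = some (L[j]'hj)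

/-- `φ_α(β) = c` for partial functions. -/
def phiPRel (mk : List A → A) (qp rp : A → A) (α β : A → Option A) (c : A) : Prop :=
  ∃ L, PInterrog mk qp α β L ∧ α (mk L) = some (rp c)

/-- `a`-interrogation of a partial `β` by a partial `α`. -/
def PAInterrog (mk : List A → A) (qp : A → A) (a : A) (α β : A → Option A)
    (L : List A) : Prop :=
  ∀ j (hj : j < L.length), ∃ b, α (mk (a :: L.take j)) = some (qp b) ∧ β b = some (L[j]'hj)

/-- `φ^a(α,β) = c` for partial functions. -/
def phiPA (mk : List A → A) (qp rp : A → A) (a : A) (α β : A → Option A) (c : A) : Prop :=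
  ∃ L, PAInterrog mk qp a α β L ∧ α (mk (a :: L)) = some (rp c)

/-- The (total!) application of `K₂^p(A)` on partial functions. -/
def K2pApp (mk : List A → A) (qp rp : A → A) (α β : A → Option A) : A → Option A :=
  fun a => if h : ∃ c, phiPA mk qp rp a α β c then some h.choose else none

/-- `K₂^p(A)` as a `PCAStruct` (with everywhere-defined application). -/
def K2p (mk : List A → A) (qp rp : A → A) : PCAStruct (A → Option A) :=
  ⟨fun α β => Part.some (K2pApp mk qp rp α β)⟩

/-! ### A pca with standard structure (Booleans, pairing, tuple coding, recursion) -/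

/-- A pca together with the standard derived structure: Booleans with a case
combinator, pairing, an injective standard tuple coding with combinators
manipulating it, and a fixed-point combinator. All of these exist in any
(nontrivial) pca. -/
structure StdPCA (A : Type u) where
  S : PCAStruct A
  isPCA : IsPCA S
  t : A
  f : A
  t_ne_f : t ≠ f
  Cc : A
  C_t : ∀ a b : A, pap S (pap S (S.app Cc t) (Part.some a)) (Part.some b) = Part.some a
  C_f : ∀ a b : A, pap S (pap S (S.app Cc f) (Part.some a)) (Part.some b) = Part.some b
  pairF : A → A → A
  Pc : A
  P0 : A
  P1 : A
  P_spec : ∀ x y : A, pap S (S.app Pc x) (Part.some y) = Part.some (pairF x y)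
  P0_spec : ∀ x y : A, S.app P0 (pairF x y) = Part.some x
  P1_spec : ∀ x y : A, S.app P1 (pairF x y) = Part.some y
  tup : List A → A
  tup_inj : Function.Injective tup
  CONS : A
  CONS_spec : ∀ (x : A) (L : List A),
    pap S (S.app CONS x) (Part.some (tup L)) = Part.some (tup (x :: L))
  SNOC : A
  SNOC_spec : ∀ (L : List A) (y : A),
    pap S (S.app SNOC (tup L)) (Part.some y) = Part.some (tup (L ++ [y]))
  Zc : A
  Z_spec : ∀ g : A, (S.app Zc g).Dom ∧ ∀ zg ∈ S.app Zc g, ∀ x : A,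
    S.app zg x = pap S (S.app g zg) (Part.some x)

/-- The partial function `x ↦ a·x` represented by `a ∈ A`. -/
def abar (P : StdPCA A) (a : A) : A → Option A :=
  fun x => if h : (P.S.app a x).Dom then some ((P.S.app a x).get h) else none

/-- An `x`-interrogation of the oracle `g : A ⇀ A` by `a ∈ A`, inside the pca. -/
def OInterrog (P : StdPCA A) (g : A → Option A) (a x : A) (L : List A) : Prop :=
  ∀ j (hj : j < L.length), ∃ v,
    P.S.app a (P.tup (x :: L.take j)) = Part.some (P.pairF P.f v) ∧ g v = some (L[j]'hj)

/-- The oracle application of `A[g]` : `a ·^g x = c`. -/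
def oapp (P : StdPCA A) (g : A → Option A) (a x c : A) : Prop :=
  ∃ L, OInterrog P g a x L ∧ P.S.app a (P.tup (x :: L)) = Part.some (P.pairF P.t c)

/-- `fn ≤_T g` : `fn` is representable in `A[g]`. -/
def leT (P : StdPCA A) (fn g : A → Option A) : Prop :=
  ∃ a : A, ∀ x y, fn x = some y → oapp P g a x y

/-- `j` is the join `f ⊔ g`. -/
def JoinSpec (P : StdPCA A) (f g j : A → Option A) : Prop :=
  (∀ x, j (P.pairF P.t x) = f x) ∧ (∀ x, j (P.pairF P.f x) = g x) ∧
  (∀ y, (∀ x, y ≠ P.pairF P.t x ∧ y ≠ P.pairF P.f x) → j y = none)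

/-- `K₂(A)` (built from the coding `mk`, `q`, `r`) is compatible with the pca
structure on `A`: elements of `A` translate between the codings and between
`q, r` and `⊥, ⊤`. -/
def CompatCoding (P : StdPCA A) (mk : List A → A) (q r : A) : Prop :=
  (∃ a : A, ∀ L, P.S.app a (mk L) = Part.some (P.tup L)) ∧
  (∃ b : A, ∀ L, P.S.app b (P.tup L) = Part.some (mk L)) ∧
  (∃ c : A, P.S.app c q = Part.some P.f ∧ P.S.app c r = Part.some P.t)

/-! Take `Φ α = a₀` exactly when `α` takes the value `a₀` somewhere. If a total sequential tree
computed `Φ`, the path answering `b₁ ≠ a₀` to every query never reaches a leaf (the constant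
function `b₁` lies outside the domain), so it is infinite; it queries only countably many
arguments, so some `x₀ ∈ A` is never queried. The function equal to `a₀` at `x₀` and to `b₁`
elsewhere lies in the domain, yet it follows this infinite path, so it reaches no leaf. -/

theorem exists_immSucc_le {X : Type*} [PartialOrder X] {T : Set X} {p v : X}
    (hfin : (Set.Iic v).Finite) (hv : v ∈ T) (hpv : p < v) : ∃ q, ImmSucc T p q ∧ q ≤ v := by
  have hS : {t | t ∈ T ∧ p < t ∧ t ≤ v}.Finite := hfin.subset fun t ht => ht.2.2
  obtain ⟨q, ⟨hqT, hpq, hqv⟩, hmin⟩ := hS.exists_minimal ⟨v, hv, hpv, le_rfl⟩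
  refine ⟨q, ⟨hqT, hpq, ?_⟩, hqv⟩
  rintro ⟨t, htT, hpt, htq⟩
  exact htq.not_ge (hmin ⟨htT, hpt, htq.le.trans hqv⟩ htq.le)

namespace FPF

theorem mem_dom {p : FPF A} {a : A} : a ∈ p.dom ↔ ∃ b, (a, b) ∈ p.val := by
  simp [FPF.dom]

theorem dom_countable (p : FPF A) : p.dom.Countable :=
  (p.2.2.image Prod.fst).countable

theorem finite_Iic (v : FPF A) : (Set.Iic v).Finite :=
  v.2.2.finite_subsets.preimage Subtype.val_injective.injOn

theorem not_forall_le_of_strictMono {f : ℕ → FPF A} (hf : StrictMono f) (v : FPF A) :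
    ¬∀ n, f n ≤ v := fun h =>
  Set.infinite_range_of_injective hf.injective (v.finite_Iic.subset (Set.range_subset_iff.2 h))

theorem exists_forall_notMem_dom [Uncountable A] (f : ℕ → FPF A) :
    ∃ x, ∀ n, x ∉ (f n).dom := by
  by_contra! h
  exact Set.not_countable_univ (Set.eq_univ_of_forall (fun x => Set.mem_iUnion.2 (h x)) ▸
    Set.countable_iUnion fun n => (f n).dom_countable)

def ext (p : FPF A) (a b : A) (ha : a ∉ p.dom) : FPF A :=
  ⟨insert (a, b) p.val, by
    refine ⟨fun x y y' h h' => ?_, p.2.2.insert _⟩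
    simp only [Set.mem_insert_iff, Prod.mk.injEq] at h h'
    rcases h with ⟨rfl, rfl⟩ | h
    · rcases h' with ⟨-, rfl⟩ | h'
      · rfl
      · exact absurd (mem_dom.2 ⟨y', h'⟩) ha
    · rcases h' with ⟨rfl, rfl⟩ | h'
      · exact absurd (mem_dom.2 ⟨y, h⟩) ha
      · exact p.2.1 h h'⟩

theorem dom_ext (p : FPF A) (a b : A) (ha : a ∉ p.dom) :
    (p.ext a b ha).dom = insert a p.dom :=
  Set.image_insert_eq

theorem lt_ext (p : FPF A) (a b : A) (ha : a ∉ p.dom) : p < p.ext a b ha :=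
  Set.ssubset_insert fun h => ha (mem_dom.2 ⟨b, h⟩)

theorem ext_le {p q : FPF A} {a b : A} (ha : a ∉ p.dom) (hpq : p ≤ q) (hab : (a, b) ∈ q.val) :
    p.ext a b ha ≤ q :=
  Set.insert_subset hab hpq

end FPF

theorem agrees_update {p : FPF A} {α : A → A} (hα : agrees α p) {x : A} (hx : x ∉ p.dom)
    (c : A) : agrees (Function.update α x c) p := fun a b hab => by
  have hax : a ≠ x := by rintro rfl; exact hx (FPF.mem_dom.2 ⟨b, hab⟩)
  rw [Function.update_of_ne hax, hα hab]

theorem agrees_ext {p : FPF A} {α : A → A} {a b : A} (ha : a ∉ p.dom) :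
    agrees α (p.ext a b ha) ↔ α a = b ∧ agrees α p := by
  simp only [agrees, FPF.ext, Set.mem_insert_iff, Prod.mk.injEq]
  constructor
  · intro h
    exact ⟨h (Or.inl ⟨rfl, rfl⟩), fun x y hxy => h (Or.inr hxy)⟩
  · rintro ⟨hab, hp⟩ x y (⟨rfl, rfl⟩ | hxy)
    exacts [hab, hp hxy]

section TotalSeqTree

variable {T : Set (FPF A)} {p : FPF A} {a : A} (ha : a ∉ p.dom)
  (hsucc : ∀ q, ImmSucc T p q ↔ p < q ∧ q.dom = insert a p.dom)
include ha hsucc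

theorem immSucc_ext (b : A) : ImmSucc T p (p.ext a b ha) :=
  (hsucc _).2 ⟨p.lt_ext a b ha, p.dom_ext a b ha⟩

theorem ext_le_of_le_isLeaf {v : FPF A} (hv : IsLeaf T v) (hp : ¬IsLeaf T p) (hpv : p ≤ v)
    {α : A → A} (hα : agrees α v) : p.ext a (α a) ha ≤ v := by
  have hpv' : p < v := hpv.lt_of_ne (by rintro rfl; exact hp hv)
  obtain ⟨q, hq, hqv⟩ := exists_immSucc_le v.finite_Iic hv.1 hpv'
  obtain ⟨c, hc⟩ := FPF.mem_dom.1 (((hsucc q).1 hq).2 ▸ Set.mem_insert a p.dom)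
  have hac : α a = c := hα (hqv hc)
  exact (FPF.ext_le ha hq.2.1.le (hac ▸ hc)).trans hqv

end TotalSeqTree

def hitConst (a₀ : A) (α : A → A) : Option A :=
  if ∃ a, α a = a₀ then some a₀ else none

theorem isSome_hitConst {a₀ : A} {α : A → A} : (hitConst a₀ α).isSome ↔ ∃ a, α a = a₀ := by
  unfold hitConst; split_ifs with h <;> simpa using h

theorem hitConst_eq_none_of_forall_ne {a₀ : A} {α : A → A} (h : ∀ a, α a ≠ a₀) :
    hitConst a₀ α = none :=
  if_neg fun ⟨a, ha⟩ => h a ha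

theorem isOpen_setOf_isSome_hitConst [TopologicalSpace A] [DiscreteTopology A] (a₀ : A) :
    IsOpen {α : A → A | (hitConst a₀ α).isSome} := by
  simp only [isSome_hitConst, Set.ofPred_exists]
  exact isOpen_iUnion fun a =>
    ((continuous_apply (A := fun _ : A => A) a).isOpen_preimage {a₀} (isOpen_discrete _) :)

theorem continuousOn_hitConst [TopologicalSpace A] [TopologicalSpace (Option A)] (a₀ : A) :
    ContinuousOn (hitConst a₀) {α : A → A | (hitConst a₀ α).isSome} :=
  (continuousOn_const (c := some a₀)).congr fun _ hα => if_pos (isSome_hitConst.1 hα)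

theorem not_seqRel_hitConst [Uncountable A] (a₀ : A) :
    ¬SeqRel (fun α b => hitConst a₀ α = some b) := by
  rintro ⟨T, F, ⟨htree, hsucc⟩, hspec⟩
  obtain ⟨b₁, hb₁⟩ := exists_ne a₀
  let OnPath (p : FPF A) : Prop := p ∈ T ∧ agrees (fun _ => b₁) p
  have not_isLeaf : ∀ p, OnPath p → ¬IsLeaf T p := fun p hp hleaf => by
    have h : hitConst a₀ (fun _ => b₁) = some (F p) := (hspec _ _).2 ⟨p, hleaf, hp.2, rfl⟩
    rw [hitConst_eq_none_of_forall_ne fun _ => hb₁] at h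
    exact Option.some_ne_none _ h.symm
  have step : ∀ p : {p // OnPath p}, ∃ q : {q // OnPath q}, p.1 < q.1 ∧
      ∀ v α, IsLeaf T v → agrees α v → agrees α q.1 → p.1 ≤ v → q.1 ≤ v := by
    rintro ⟨p, hpT, hpb⟩
    obtain ⟨a, ha, hsa⟩ := hsucc p hpT (not_isLeaf p ⟨hpT, hpb⟩)
    refine ⟨⟨p.ext a b₁ ha, (immSucc_ext ha hsa b₁).1, (agrees_ext ha).2 ⟨rfl, hpb⟩⟩,
      p.lt_ext a b₁ ha, fun v α hv hαv hαq hpv => ?_⟩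
    have h := ext_le_of_le_isLeaf ha hsa hv (not_isLeaf p ⟨hpT, hpb⟩) hpv hαv
    rwa [((agrees_ext ha).1 hαq).1] at h
  choose next hnext_lt hnext_le using step
  let root : {p // OnPath p} := ⟨FPF.empty A, htree.1, fun _ _ h => h.elim⟩
  let f (n : ℕ) : FPF A := (next^[n] root).1
  have hf_succ (n : ℕ) : f (n + 1) = (next (next^[n] root)).1 :=
    congrArg Subtype.val (Function.iterate_succ_apply' next n root)
  have hf_mono : StrictMono f := strictMono_nat_of_lt_succ fun n => hf_succ n ▸ hnext_lt _
  obtain ⟨x₀, hx₀⟩ := FPF.exists_forall_notMem_dom f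
  let α := Function.update (fun _ => b₁) x₀ a₀
  have hα_f (n : ℕ) : agrees α (f n) := agrees_update (next^[n] root).2.2 (hx₀ n) a₀
  obtain ⟨v, hv, hαv, -⟩ := (hspec α a₀).1 (if_pos ⟨x₀, Function.update_self ..⟩)
  refine FPF.not_forall_le_of_strictMono hf_mono v fun n => ?_
  induction n with
  | zero => exact fun _ h => h.elim
  | succ n ih => rw [hf_succ]; exact hnext_le _ v α hv hαv (hf_succ n ▸ hα_f (n + 1)) ih

/-- If `A` is uncountable, there is a partial continuous
function `A^A ⇀ A` with open domain which is not partial sequential. -/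
theorem statement1 {A : Type u} [Uncountable A] :
    ∃ Φ : (A → A) → Option A,
      (letI : TopologicalSpace A := ⊥; IsOpen {α : A → A | (Φ α).isSome}) ∧
      (letI : TopologicalSpace A := ⊥; letI : TopologicalSpace (Option A) := ⊥;
        ContinuousOn Φ {α : A → A | (Φ α).isSome}) ∧
      ¬ SeqRel (fun β b => Φ β = some b) := by
  obtain ⟨a₀⟩ : Nonempty A := inferInstance
  let _ : TopologicalSpace A := ⊥
  let _ : TopologicalSpace (Option A) := ⊥
  have _ : DiscreteTopology A := ⟨rfl⟩
  exact ⟨hitConst a₀, isOpen_setOf_isSome_hitConst a₀, continuousOn_hitConst a₀,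
    not_seqRel_hitConst a₀⟩

end OostenK2
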